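/- arXiv:2305.14013 — 3 statements merged into one kernel-verified Lean document; each statement's English description precedes it below -/
import Mathlib

section
/- For every infinite cardinal κ there are at least κ⁺ distinct topological types of rayless trees of size κ. Precisely: if V is a type of cardinality κ, then the quotient of the set of rayless trees with vertex set V by the equivalence relation ≡ (same topological type) has cardinality at least κ⁺. -/
/-!
Schmidt's ordinal rank of rayless graphs: `G` has rank at most `α` if it has no edges, or if
deleting some finite `S` leaves only components of rank `< α`. A topological minor embedding
`H ≤ G` pulls such an `S` back to a finite set of branch vertices of `H` (each vertex of `S` is
interior to at most one subdivided edge), so rank is monotone under `≤` and an invariant of `≡`;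
a graph of rank `α` is rayless, since a ray has a tail inside one component of `G - S`.
For `0 < o < κ⁺` the finite sequences below `o` that strictly decrease away from the root, with
`κ` labels at each step, form a rayless tree on `κ` vertices of rank exactly `o`: deleting the
root leaves copies of the trees of smaller rank, each of them `κ` times, so that no finite set
can meet all copies. These `κ⁺` ranks give `κ⁺` distinct topological types.
-/

universe u v

structure TopMinorEmb {V : Type u} {W : Type v} (H : SimpleGraph V) (G : SimpleGraph W) where
  toFun : V → W
  inj : Function.Injective toFun
  path : ∀ ⦃a b : V⦄, H.Adj a b → G.Walk (toFun a) (toFun b)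
  path_isPath : ∀ ⦃a b : V⦄ (h : H.Adj a b), (path h).IsPath
  path_symm : ∀ ⦃a b : V⦄ (h : H.Adj a b), path h.symm = (path h).reverse
  internal_avoid_image : ∀ ⦃a b : V⦄ (h : H.Adj a b) (w : W),
      w ∈ (path h).support → w ≠ toFun a → w ≠ toFun b → ∀ x : V, toFun x ≠ w
  internally_disjoint : ∀ ⦃a b a' b' : V⦄ (h : H.Adj a b) (h' : H.Adj a' b'),
      s(a, b) ≠ s(a', b') → ∀ w : W,
        w ∈ (path h).support → w ∈ (path h').support → w = toFun a ∨ w = toFun b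

def TopMinorLE {V : Type u} {W : Type v} (H : SimpleGraph V) (G : SimpleGraph W) : Prop :=
  Nonempty (TopMinorEmb H G)

def TopEquiv {V : Type u} {W : Type v} (G : SimpleGraph V) (H : SimpleGraph W) : Prop :=
  TopMinorLE G H ∧ TopMinorLE H G

def HasRay {V : Type u} (G : SimpleGraph V) : Prop :=
  ∃ f : ℕ → V, Function.Injective f ∧ ∀ n, G.Adj (f n) (f (n + 1))

def Rayless {V : Type u} (G : SimpleGraph V) : Prop := ¬ HasRay G

universe w

open SimpleGraph

namespace SimpleGraph

variable {W : Type v}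

def restrict (G : SimpleGraph W) (P : Set W) : SimpleGraph W where
  Adj x y := G.Adj x y ∧ x ∈ P ∧ y ∈ P
  symm := ⟨fun _ _ h => ⟨h.1.symm, h.2.2, h.2.1⟩⟩
  loopless := ⟨fun x h => G.loopless.irrefl x h.1⟩

def componentGraph (G : SimpleGraph W) (v : W) : SimpleGraph W :=
  G.restrict {w | G.Reachable v w}

lemma componentGraph_eq_bot {G : SimpleGraph W} {v : W} (hv : ∀ w, ¬ G.Adj v w) :
    G.componentGraph v = ⊥ := by
  ext x y
  simp only [bot_adj, iff_false]
  rintro ⟨hxy, ⟨p⟩, -⟩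
  cases p with
  | nil => exact hv y hxy
  | cons h _ => exact hv _ h

/-- At a vertex of maximal height on a cycle, both cycle neighbours would be its parent. -/
theorem isAcyclic_of_adj_parent {G : SimpleGraph W} (p : W → W) (h : W → ℕ)
    (hadj : ∀ ⦃x y⦄, G.Adj x y → y = p x ∧ h y < h x ∨ x = p y ∧ h x < h y) :
    G.IsAcyclic := by
  classical
  intro v c hc
  obtain ⟨w, hw, hmax⟩ := c.support.toFinset.exists_max_image h ⟨v, by simp⟩
  rw [List.mem_toFinset] at hw
  let c' := c.rotate w hw
  have hc' : c'.IsCycle := hc.rotate hw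
  have hparent : ∀ u, G.Adj w u → u ∈ c'.support → u = p w := by
    intro u hu hmem
    rcases hadj hu with ⟨rfl, -⟩ | ⟨-, hlt⟩
    · rfl
    · rw [Walk.mem_support_rotate_iff] at hmem
      exact absurd (hmax u (List.mem_toFinset.mpr hmem)) hlt.not_ge
  exact hc'.snd_ne_penultimate <|
    (hparent _ (c'.adj_snd hc'.not_nil) (c'.getVert_mem_support _)).trans
      (hparent _ (c'.adj_penultimate hc'.not_nil).symm (c'.getVert_mem_support _)).symm

namespace Walk

variable {G : SimpleGraph W} {P : Set W}

def toRestrict {x y : W} (p : G.Walk x y) (hp : ∀ w ∈ p.support, w ∈ P) :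
    (G.restrict P).Walk x y :=
  p.transfer _ fun e he => by
    induction e using Sym2.ind with
    | _ a b =>
      exact ⟨p.adj_of_mem_edges he, hp a (p.fst_mem_support_of_mem_edges he),
        hp b (p.snd_mem_support_of_mem_edges he)⟩

lemma support_toRestrict {x y : W} (p : G.Walk x y) (hp : ∀ w ∈ p.support, w ∈ P) :
    (p.toRestrict hp).support = p.support :=
  support_transfer _ _

lemma reverse_toRestrict {x y : W} (p : G.Walk x y) (hp : ∀ w ∈ p.support, w ∈ P) :
    (p.toRestrict hp).reverse = p.reverse.toRestrict (by simpa using hp) :=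
  reverse_transfer _ _

lemma IsPath.toRestrict {x y : W} {p : G.Walk x y} (h : p.IsPath)
    (hp : ∀ w ∈ p.support, w ∈ P) :
    (p.toRestrict hp).IsPath :=
  h.transfer _

end Walk

end SimpleGraph

namespace TopMinorEmb

variable {V : Type u} {W : Type v} {H : SimpleGraph V} {G : SimpleGraph W}

def ofHom (f : H →g G) (hf : Function.Injective f) : TopMinorEmb H G where
  toFun := f
  inj := hf
  path _ _ h := (f.map_adj h).toWalk
  path_isPath _ _ h := Walk.IsPath.of_adj _
  path_symm _ _ h := by simp
  internal_avoid_image _ _ h w hw hwa hwb := by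
    simp only [Adj.support_toWalk, List.mem_cons, List.not_mem_nil, or_false] at hw
    tauto
  internally_disjoint _ _ _ _ h _ _ w hw _ := by
    simpa only [Adj.support_toWalk, List.mem_cons, List.not_mem_nil, or_false] using hw

lemma eq_bot (E : TopMinorEmb H (⊥ : SimpleGraph W)) : H = ⊥ := by
  ext a b
  simp only [bot_adj, iff_false]
  intro h
  exact H.loopless.irrefl a (E.inj (reachable_bot.mp (E.path h).reachable) ▸ h)

lemma reachable (E : TopMinorEmb H G) {a b : V} (h : H.Reachable a b) :
    G.Reachable (E.toFun a) (E.toFun b) := by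
  rw [reachable_iff_reflTransGen] at h ⊢
  exact h.lift' E.toFun fun _ _ hab => (reachable_iff_reflTransGen _ _).mp (E.path hab).reachable

def restrict (E : TopMinorEmb H G) (P : Set V) (Q : Set W)
    (hPQ : ∀ ⦃a b : V⦄ (h : H.Adj a b), a ∈ P → b ∈ P →
      ∀ w ∈ (E.path h).support, w ∈ Q) :
    TopMinorEmb (H.restrict P) (G.restrict Q) where
  toFun := E.toFun
  inj := E.inj
  path _ _ h := (E.path h.1).toRestrict (hPQ h.1 h.2.1 h.2.2)
  path_isPath _ _ h := (E.path_isPath h.1).toRestrict _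
  path_symm _ _ h := by
    rw [Walk.reverse_toRestrict]
    congr 1
    exact E.path_symm h.1
  internal_avoid_image _ _ h w hw := by
    rw [Walk.support_toRestrict] at hw
    exact E.internal_avoid_image h.1 w hw
  internally_disjoint _ _ _ _ h h' hne w hw hw' := by
    rw [Walk.support_toRestrict] at hw hw'
    exact E.internally_disjoint h.1 h'.1 hne w hw hw'

def componentGraph (E : TopMinorEmb H G) (v : V) :
    TopMinorEmb (H.componentGraph v) (G.componentGraph (E.toFun v)) :=
  E.restrict _ _ fun _ _ h ha _ w hw => by
    classical exact (E.reachable ha).trans ((E.path h).takeUntil w hw).reachable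

def interiorEnds (E : TopMinorEmb H G) (w : W) : Set V :=
  {a | ∃ b, ∃ h : H.Adj a b, w ∈ (E.path h).support ∧ w ≠ E.toFun a ∧ w ≠ E.toFun b}

lemma finite_interiorEnds (E : TopMinorEmb H G) (w : W) : (E.interiorEnds w).Finite := by
  rcases (E.interiorEnds w).eq_empty_or_nonempty with he | ⟨a₀, b₀, h₀, hw₀, -, -⟩
  · rw [he]; exact Set.finite_empty
  refine (Set.toFinite {a₀, b₀}).subset fun a ⟨b, h, hw, hwa, hwb⟩ => ?_
  have hedge : s(a, b) = s(a₀, b₀) := by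
    by_contra hne
    rcases E.internally_disjoint h h₀ hne w hw hw₀ with h' | h' <;> contradiction
  have ha : a ∈ s(a₀, b₀) := hedge ▸ Sym2.mem_mk_left a b
  simpa using ha

lemma exists_finset_avoiding (E : TopMinorEmb H G) (S : Finset W) :
    ∃ S' : Finset V, (∀ a ∉ S', E.toFun a ∉ S) ∧
      ∀ ⦃a b : V⦄ (h : H.Adj a b), a ∈ (↑S' : Set V)ᶜ → b ∈ (↑S' : Set V)ᶜ →
        ∀ w ∈ (E.path h).support, w ∈ (↑S : Set W)ᶜ := by
  classical
  have hfin : (E.toFun ⁻¹' ↑S ∪ ⋃ w ∈ S, E.interiorEnds w).Finite :=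
    (S.finite_toSet.preimage E.inj.injOn).union
      (S.finite_toSet.biUnion fun w _ => E.finite_interiorEnds w)
  refine ⟨hfin.toFinset, fun a ha haS => ha (by simp [haS]), fun a b h ha hb w hw hwS => ?_⟩
  simp only [Set.mem_compl_iff, Finset.mem_coe, Set.Finite.mem_toFinset, Set.mem_union,
    Set.mem_preimage, Set.mem_iUnion, not_or, not_exists] at ha hb hwS
  by_cases hwa : w = E.toFun a
  · exact ha.1 (hwa ▸ hwS)
  by_cases hwb : w = E.toFun b
  · exact hb.1 (hwb ▸ hwS)
  exact ha.2 w hwS ⟨b, h, hw, hwa, hwb⟩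

end TopMinorEmb

theorem SimpleGraph.Iso.topEquiv {V : Type u} {W : Type v} {G : SimpleGraph V}
    {H : SimpleGraph W} (e : G ≃g H) : TopEquiv G H :=
  ⟨⟨.ofHom e.toHom e.injective⟩, ⟨.ofHom e.symm.toHom e.symm.injective⟩⟩

/-- Schmidt's rank is at most `α`. The components of `G - S` are kept as spanning subgraphs
of `W`, so that the recursion stays on one vertex type. -/
def RankLE {W : Type v} (α : Ordinal.{w}) (G : SimpleGraph W) : Prop :=
  G = ⊥ ∨ ∃ S : Finset W, ∀ v ∉ S,
    ∃ β, ∃ _ : β < α, RankLE β ((G.restrict (↑S)ᶜ).componentGraph v)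
termination_by α

section Rank

variable {V : Type u} {W : Type v} {α β : Ordinal.{w}}

lemma rankLE_iff {G : SimpleGraph W} : RankLE α G ↔
    G = ⊥ ∨ ∃ S : Finset W, ∀ v ∉ S,
      ∃ β < α, RankLE β ((G.restrict (↑S)ᶜ).componentGraph v) := by
  rw [RankLE]
  simp only [exists_prop]

lemma RankLE.bot : RankLE α (⊥ : SimpleGraph W) := rankLE_iff.mpr (Or.inl rfl)

lemma RankLE.mono {G : SimpleGraph W} (hαβ : α ≤ β) (h : RankLE α G) : RankLE β G := by
  rcases rankLE_iff.mp h with rfl | ⟨S, hS⟩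
  · exact .bot
  refine rankLE_iff.mpr (Or.inr ⟨S, fun v hv => ?_⟩)
  obtain ⟨γ, hγ, hrank⟩ := hS v hv
  exact ⟨γ, hγ.trans_le hαβ, hrank⟩

theorem RankLE.of_topMinorLE {H : SimpleGraph V} {G : SimpleGraph W} (hHG : TopMinorLE H G)
    (hG : RankLE α G) : RankLE α H := by
  induction α using WellFoundedLT.induction generalizing H G with
  | _ α IH =>
  obtain ⟨E⟩ := hHG
  rcases rankLE_iff.mp hG with rfl | ⟨S, hS⟩
  · exact rankLE_iff.mpr (Or.inl E.eq_bot)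
  obtain ⟨S', hS'S, hpath⟩ := E.exists_finset_avoiding S
  refine rankLE_iff.mpr (Or.inr ⟨S', fun v hv => ?_⟩)
  obtain ⟨β, hβ, hrank⟩ := hS _ (hS'S v hv)
  exact ⟨β, hβ, IH β hβ ⟨(E.restrict _ _ hpath).componentGraph v⟩ hrank⟩

lemma RankLE.anti {H G : SimpleGraph W} (hHG : H ≤ G) (hG : RankLE α G) : RankLE α H :=
  hG.of_topMinorLE ⟨.ofHom (Hom.ofLE hHG) Function.injective_id⟩

lemma rankLE_congr {G : SimpleGraph V} {H : SimpleGraph W} (h : TopEquiv G H) :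
    RankLE α G ↔ RankLE α H :=
  ⟨.of_topMinorLE h.2, .of_topMinorLE h.1⟩

theorem RankLE.rayless {G : SimpleGraph W} (h : RankLE α G) : Rayless G := by
  induction α using WellFoundedLT.induction generalizing G with
  | _ α IH =>
  rintro ⟨f, hf, hadj⟩
  rcases rankLE_iff.mp h with rfl | ⟨S, hS⟩
  · exact hadj 0
  obtain ⟨N, hN⟩ := (S.finite_toSet.preimage hf.injOn).bddAbove
  have hout : ∀ n, N < n → f n ∈ (↑S : Set W)ᶜ := fun n hn hfn => (hN hfn).not_gt hn
  let G' := G.restrict (↑S)ᶜ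
  have hedge : ∀ n, G'.Adj (f (N + 1 + n)) (f (N + 1 + n + 1)) :=
    fun n => ⟨hadj _, hout _ (by omega), hout _ (by omega)⟩
  have hreach : ∀ n, G'.Reachable (f (N + 1)) (f (N + 1 + n)) := by
    intro n
    induction n with
    | zero => rfl
    | succ n ih => exact ih.trans (hedge n).reachable
  obtain ⟨β, hβ, hrank⟩ := hS (f (N + 1)) (hout _ (Nat.lt_succ_self N))
  exact IH β hβ hrank ⟨fun n => f (N + 1 + n), hf.comp (add_right_injective _),
    fun n => ⟨hedge n, hreach n, hreach (n + 1)⟩⟩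

end Rank

lemma List.exists_cons_suffix {α : Type u} {s l : List α} (hs : s <:+ l) (hne : l ≠ s) :
    ∃ x, x :: s <:+ l := by
  induction l with
  | nil => exact absurd (List.eq_nil_of_suffix_nil hs).symm hne
  | cons y t ih =>
    rcases List.suffix_cons_iff.mp hs with rfl | hst
    · exact absurd rfl hne
    by_cases hts : t = s
    · exact ⟨y, hts ▸ List.suffix_refl _⟩
    obtain ⟨x, hx⟩ := ih hst hts
    exact ⟨x, hx.trans (List.suffix_cons y t)⟩

open Ordinal

section ListTree

variable {O : Type u} [LinearOrder O] {I : Type v}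

/-- The list `x_k :: ⋯ :: x_1` is the vertex reached from the root `[]` via `[x_1]`,
`[x_2, x_1]`, …; first coordinates strictly decrease away from the root, second coordinates
label the copies. -/
abbrev Admissible (l : List (O × I)) : Prop := l.IsChain fun p q => p.1 < q.1

lemma Admissible.tail {x : O × I} {l : List (O × I)} (h : Admissible (x :: l)) : Admissible l :=
  List.IsChain.tail h

variable (O I) in
def admissibleTree : SimpleGraph (List (O × I)) :=
  fromRel fun l m => Admissible m ∧ ∃ x, m = x :: l

lemma admissibleTree_adj_cons {x : O × I} {l : List (O × I)} (h : Admissible (x :: l)) :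
    (admissibleTree O I).Adj l (x :: l) :=
  (fromRel_adj _ _ _).mpr ⟨(List.cons_ne_self x l).symm, Or.inl ⟨h, x, rfl⟩⟩

lemma admissibleTree_adj_iff {l m : List (O × I)} : (admissibleTree O I).Adj l m ↔
    (Admissible m ∧ ∃ x, m = x :: l) ∨ (Admissible l ∧ ∃ x, l = x :: m) := by
  rw [admissibleTree, fromRel_adj, and_iff_right_iff_imp]
  rintro (⟨-, x, rfl⟩ | ⟨-, x, rfl⟩)
  · exact (List.cons_ne_self x l).symm
  · exact List.cons_ne_self x m

lemma admissible_of_admissibleTree_adj {l m : List (O × I)} (h : (admissibleTree O I).Adj l m) :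
    Admissible l := by
  rcases admissibleTree_adj_iff.mp h with ⟨hm, x, rfl⟩ | ⟨hl, -⟩
  · exact hm.tail
  · exact hl

def subtreeAt (s : List (O × I)) : SimpleGraph (List (O × I)) :=
  (admissibleTree O I).restrict {l | s <:+ l}

lemma exists_admissible_cons_suffix_of_subtreeAt_adj {s l m : List (O × I)}
    (h : (subtreeAt s).Adj l m) (hl : l ≠ s) : ∃ x, Admissible (x :: s) ∧ x :: s <:+ l := by
  obtain ⟨x, hx⟩ := List.exists_cons_suffix h.2.1 hl
  exact ⟨x, (admissible_of_admissibleTree_adj h.1).suffix hx, hx⟩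

lemma subtreeAt_eq_bot {s : List (O × I)} (hs : ∀ x, ¬ Admissible (x :: s)) :
    subtreeAt s = ⊥ := by
  ext l m
  simp only [bot_adj, iff_false]
  intro h
  by_cases hl : l = s
  · obtain ⟨x, hx, -⟩ :=
      exists_admissible_cons_suffix_of_subtreeAt_adj h.symm (hl ▸ h.ne.symm)
    exact hs x hx
  · obtain ⟨x, hx, -⟩ := exists_admissible_cons_suffix_of_subtreeAt_adj h hl
    exact hs x hx

lemma cons_suffix_of_reachable {s v l : List (O × I)} {P : Set (List (O × I))} (hs : s ∉ P)
    {x : O × I} (hv : x :: s <:+ v) (hr : ((subtreeAt s).restrict P).Reachable v l) :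
    x :: s <:+ l := by
  rw [reachable_iff_reflTransGen] at hr
  induction hr with
  | refl => exact hv
  | tail _ hadj ih =>
    obtain ⟨⟨hadj, -, hsm⟩, -, hmP⟩ := hadj
    rcases admissibleTree_adj_iff.mp hadj with ⟨-, y, rfl⟩ | ⟨-, y, rfl⟩
    · exact ih.trans (List.suffix_cons _ _)
    · rcases List.suffix_cons_iff.mp ih with hxs | hxs
      · exact absurd ((List.cons_eq_cons.mp hxs).2 ▸ hmP) hs
      · exact hxs

lemma componentGraph_restrict_subtreeAt_le {s v : List (O × I)} {P : Set (List (O × I))}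
    (hs : s ∉ P) {x : O × I} (hv : x :: s <:+ v) :
    ((subtreeAt s).restrict P).componentGraph v ≤ subtreeAt (x :: s) :=
  fun _ _ ⟨h, hl, hm⟩ =>
    ⟨h.1.1, cons_suffix_of_reachable hs hv hl, cons_suffix_of_reachable hs hv hm⟩

lemma reachable_restrict_subtreeAt {s v : List (O × I)} {P : Set (List (O × I))}
    (hsv : s <:+ v) (hP : ∀ l, v <:+ l → l ∈ P) (t : List (O × I))
    (ht : Admissible (t ++ v)) :
    ((subtreeAt s).restrict P).Reachable v (t ++ v) := by
  induction t with
  | nil => rfl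
  | cons y t ih =>
    have htv : v <:+ t ++ v := List.suffix_append t v
    refine (ih ht.tail).trans (Adj.reachable ⟨⟨admissibleTree_adj_cons ht, ?_, ?_⟩, ?_, ?_⟩)
    · exact hsv.trans htv
    · exact hsv.trans (htv.trans (List.suffix_cons y _))
    · exact hP _ htv
    · exact hP _ (htv.trans (List.suffix_cons y _))

lemma subtreeAt_le_componentGraph_restrict {s v : List (O × I)} {P : Set (List (O × I))}
    (hsv : s <:+ v) (hP : ∀ l, v <:+ l → l ∈ P) :
    subtreeAt v ≤ ((subtreeAt s).restrict P).componentGraph v := by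
  have hreach : ∀ l, v <:+ l → Admissible l → ((subtreeAt s).restrict P).Reachable v l := by
    rintro _ ⟨t, rfl⟩ hl
    exact reachable_restrict_subtreeAt hsv hP t hl
  intro l m ⟨h, hvl, hvm⟩
  exact ⟨⟨⟨h, hsv.trans hvl, hsv.trans hvm⟩, hP l hvl, hP m hvm⟩,
    hreach l hvl (admissible_of_admissibleTree_adj h),
    hreach m hvm (admissible_of_admissibleTree_adj h.symm)⟩

variable (O I) in
/-- Non-admissible lists are attached to the root as leaves, so that the tree spans the type. -/
def listTree : SimpleGraph (List (O × I)) :=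
  admissibleTree O I ⊔ fromRel fun l m => l = [] ∧ ¬ Admissible m

lemma subtreeAt_nil_le_listTree : subtreeAt [] ≤ listTree O I := fun _ _ h => Or.inl h.1

lemma listTree_restrict_eq {P : Set (List (O × I))} (hP : [] ∉ P) :
    (listTree O I).restrict P = (subtreeAt []).restrict P := by
  ext l m
  refine ⟨fun ⟨h, hl, hm⟩ => ⟨⟨?_, List.nil_suffix, List.nil_suffix⟩, hl, hm⟩,
    fun ⟨h, hl, hm⟩ => ⟨Or.inl h.1, hl, hm⟩⟩
  rcases h with h | ⟨-, ⟨rfl, -⟩ | ⟨rfl, -⟩⟩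
  · exact h
  · exact absurd hl hP
  · exact absurd hm hP

lemma listTree_reachable_nil (l : List (O × I)) : (listTree O I).Reachable [] l := by
  have hadm : ∀ l : List (O × I), Admissible l → (listTree O I).Reachable [] l := by
    intro l hl
    induction l with
    | nil => rfl
    | cons x t ih =>
      exact (ih hl.tail).trans
        (Adj.reachable (G := listTree O I) (Or.inl (admissibleTree_adj_cons hl)))
  by_cases hl : Admissible l
  · exact hadm l hl
  · have hne : [] ≠ l := by rintro rfl; exact hl List.IsChain.nil
    exact Adj.reachable (G := listTree O I)
      (Or.inr ((fromRel_adj _ _ _).mpr ⟨hne, Or.inl ⟨rfl, hl⟩⟩))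

theorem listTree_isTree : (listTree O I).IsTree := by
  refine ⟨(connected_iff _).mpr ⟨fun l m => (listTree_reachable_nil l).symm.trans
    (listTree_reachable_nil m), ⟨[]⟩⟩, ?_⟩
  refine isAcyclic_of_adj_parent (fun l => if Admissible l then l.tail else []) List.length ?_
  rintro l m (h | ⟨hne, ⟨rfl, hm⟩ | ⟨rfl, hl⟩⟩)
  · rcases admissibleTree_adj_iff.mp h with ⟨hm, x, rfl⟩ | ⟨hl, x, rfl⟩
    · exact Or.inr ⟨by simp [hm], by simp⟩
    · exact Or.inl ⟨by simp [hl], by simp⟩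
  · exact Or.inr ⟨by simp [hm], List.length_pos_iff.mpr hne.symm⟩
  · exact Or.inl ⟨by simp [hl], List.length_pos_iff.mpr hne⟩

variable [IsWellOrder O (· < ·)]

lemma typein_lt_typein_of_admissible {x y : O × I} {s : List (O × I)}
    (h : Admissible (y :: x :: s)) : typein (· < ·) y.1 < typein (· < ·) x.1 :=
  (typein_lt_typein _).mpr (List.isChain_cons_cons.mp h).1

lemma exists_rankLE_componentGraph_restrict_subtreeAt {s : List (O × I)}
    {P : Set (List (O × I))} (hs : s ∉ P) {γ : Ordinal.{u}} (hγ : 0 < γ)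
    (hchild : ∀ x, Admissible (x :: s) → typein (· < ·) x.1 < γ)
    (hsub : ∀ x, Admissible (x :: s) → RankLE (typein (· < ·) x.1) (subtreeAt (x :: s)))
    {v : List (O × I)} (hv : v ∈ P) :
    ∃ β < γ, RankLE β (((subtreeAt s).restrict P).componentGraph v) := by
  by_cases hx : ∃ x, Admissible (x :: s) ∧ x :: s <:+ v
  · obtain ⟨x, hadm, hxv⟩ := hx
    exact ⟨_, hchild x hadm,
      (hsub x hadm).anti (componentGraph_restrict_subtreeAt_le hs hxv)⟩
  · refine ⟨0, hγ, ?_⟩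
    rw [componentGraph_eq_bot fun w hw => hx ?_]
    · exact .bot
    exact exists_admissible_cons_suffix_of_subtreeAt_adj hw.1 fun h => hs (h ▸ hv)

theorem rankLE_subtreeAt (γ : Ordinal.{u}) (s : List (O × I))
    (hchild : ∀ x, Admissible (x :: s) → typein (· < ·) x.1 < γ) :
    RankLE γ (subtreeAt s) := by
  induction γ using WellFoundedLT.induction generalizing s with
  | _ γ IH =>
  by_cases hs : ∃ x, Admissible (x :: s)
  · obtain ⟨x₀, hx₀⟩ := hs
    refine rankLE_iff.mpr (Or.inr ⟨{s}, fun v hv => ?_⟩)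
    refine exists_rankLE_componentGraph_restrict_subtreeAt (by simp)
      (zero_le.trans_lt (hchild x₀ hx₀)) hchild
      (fun x hx => IH _ (hchild x hx) _ fun _ => typein_lt_typein_of_admissible) hv
  · simp only [not_exists] at hs
    rw [subtreeAt_eq_bot hs]
    exact .bot

theorem not_rankLE_subtreeAt [Infinite I] (β : Ordinal.{u}) (s : List (O × I)) (x : O × I)
    (hx : Admissible (x :: s)) (hβ : β ≤ typein (· < ·) x.1) :
    ¬ RankLE β (subtreeAt s) := by
  classical
  induction β using WellFoundedLT.induction generalizing s x with
  | _ β IH =>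
  intro h
  rcases rankLE_iff.mp h with hbot | ⟨S, hS⟩
  · have hedge : (subtreeAt s).Adj s (x :: s) :=
      ⟨admissibleTree_adj_cons hx, List.suffix_refl s, List.suffix_cons x s⟩
    rw [hbot] at hedge
    exact hedge
  -- a label `i` unused in `S` yields a branch `subtreeAt v` that `S` does not meet
  obtain ⟨i, hi⟩ := Infinite.exists_notMem_finset (S.biUnion fun l => l.toFinset.image Prod.snd)
  set v := (x.1, i) :: s
  have hfresh : ∀ l, v <:+ l → l ∉ S := fun l hvl hlS =>
    hi (Finset.mem_biUnion.mpr ⟨l, hlS, Finset.mem_image.mpr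
      ⟨(x.1, i), List.mem_toFinset.mpr (hvl.subset List.mem_cons_self), rfl⟩⟩)
  have hv : Admissible v := List.isChain_cons.mpr (List.isChain_cons.mp hx)
  obtain ⟨β', hβ', hrank⟩ := hS v (hfresh v (List.suffix_refl v))
  obtain ⟨y, hy⟩ := typein_surj (α := O) (· < ·)
    (hβ'.trans_le (hβ.trans (typein_lt_type _ x.1).le))
  refine IH β' hβ' v (y, i) ?_ hy.ge
    (hrank.anti (subtreeAt_le_componentGraph_restrict (List.suffix_cons _ s) hfresh))
  refine List.isChain_cons_cons.mpr ⟨?_, hv⟩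
  exact (typein_lt_typein (α := O) (· < ·)).mp (hy ▸ hβ'.trans_le hβ)

theorem rankLE_listTree_iff [Infinite I] {α : Ordinal.{u}} :
    RankLE α (listTree O I) ↔ typeLT O ≤ α := by
  constructor
  · intro h
    by_contra! hlt
    obtain ⟨b, hb⟩ := typein_surj (α := O) (· < ·) hlt
    obtain ⟨i⟩ := (inferInstance : Nonempty I)
    exact not_rankLE_subtreeAt α [] (b, i) (List.isChain_singleton _) hb.ge
      (h.anti subtreeAt_nil_le_listTree)
  · intro h
    refine RankLE.mono h (rankLE_iff.mpr (Or.inr ⟨{[]}, fun v hv => ?_⟩))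
    rw [listTree_restrict_eq (by simp)]
    obtain ⟨y, t, rfl⟩ := List.exists_cons_of_ne_nil (by simpa using hv)
    exact exists_rankLE_componentGraph_restrict_subtreeAt (by simp)
      (zero_le.trans_lt (typein_lt_type _ y.1)) (fun x _ => typein_lt_type _ x.1)
      (fun x _ => rankLE_subtreeAt _ _ fun _ => typein_lt_typein_of_admissible) hv

end ListTree

theorem exists_isTree_rankLE_iff (V : Type u) [Infinite V] {o : Ordinal.{u}} (ho : o ≠ 0)
    (hcard : o.card ≤ Cardinal.mk V) :
    ∃ T : SimpleGraph V, (T.IsTree ∧ Rayless T) ∧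
      ∀ α : Ordinal.{u}, RankLE α T ↔ o ≤ α := by
  have : Nonempty o.ToType := Ordinal.nonempty_toType_iff.mpr ho
  have hlist : Cardinal.mk V = Cardinal.mk (List (o.ToType × V)) := by
    rw [Cardinal.mk_list_eq_mk, Cardinal.mk_prod, Cardinal.lift_id, Cardinal.lift_id,
      Cardinal.mk_toType, Cardinal.mul_eq_right (Cardinal.infinite_iff.mp ‹_›) hcard
        (mt Ordinal.card_eq_zero.mp ho)]
  obtain ⟨e⟩ := Cardinal.eq.mp hlist
  let iso := Iso.comap e (listTree o.ToType V)
  have hrank (α : Ordinal.{u}) : RankLE α ((listTree o.ToType V).comap e) ↔ o ≤ α := by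
    rw [rankLE_congr iso.topEquiv, rankLE_listTree_iff, type_toType]
  exact ⟨_, ⟨iso.isTree_iff.mpr listTree_isTree, ((hrank o).mpr le_rfl).rayless⟩, hrank⟩

/-- For every infinite cardinal `κ`, if `V` is a type of cardinality `κ`, then the quotient
of the set of rayless trees with vertex set `V` by the equivalence `≡` (same topological
type) has cardinality at least `κ⁺`. -/
theorem lower_bound_topological_types_of_rayless_trees (κ : Cardinal.{u})
    (hκ : Cardinal.aleph0 ≤ κ) (V : Type u) (hV : Cardinal.mk V = κ) :
    Order.succ κ ≤
      Cardinal.mk (Quot fun (T S : {G : SimpleGraph V // G.IsTree ∧ Rayless G}) =>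
        TopEquiv T.1 S.1) := by
  have : Infinite V := Cardinal.infinite_iff.mpr (hV ▸ hκ)
  let o (x : (Order.succ κ).ord.ToType) : Ordinal.{u} := Order.succ (ToType.toOrd x : Ordinal)
  have hcard (x : (Order.succ κ).ord.ToType) : (o x).card ≤ Cardinal.mk V := by
    rw [hV, ← Order.lt_succ_iff, ← Cardinal.lt_ord]
    exact (Cardinal.isSuccLimit_ord (hκ.trans (Order.le_succ κ))).succ_lt (ToType.toOrd x).2
  choose T hT hrank using fun x =>
    exists_isTree_rankLE_iff V (zero_le.trans_lt (Order.lt_succ _)).ne' (hcard x)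
  let rankSet := Quot.lift (fun T : {G : SimpleGraph V // G.IsTree ∧ Rayless G} =>
    {α : Ordinal.{u} | RankLE α T.1}) fun _ _ h => Set.ext fun _ => rankLE_congr h
  have hinj : Function.Injective (rankSet ∘ fun x => Quot.mk _ ⟨T x, hT x⟩) := by
    intro x y hxy
    simp only [Function.comp_apply, rankSet, hrank] at hxy
    exact ToType.mk.symm.injective (Subtype.val_injective
      (Order.succ_injective (Set.Ici_injective hxy)))
  calc Order.succ κ = Cardinal.mk (Order.succ κ).ord.ToType := (Cardinal.mk_ord_toType _).symm
    _ ≤ _ := Cardinal.mk_le_of_injective hinj.of_comp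
end

section
/- Let Q be a well-quasi-ordered quasi-order and κ an infinite cardinal. Then the set of elements of Q which are not κ-embeddable in Q has cardinality strictly less than κ. -/
universe u

open Cardinal

theorem Cardinal.mk_biUnion_finset_lt {α ι : Type u} {κ : Cardinal.{u}} (hκ : ℵ₀ ≤ κ)
    (s : Finset ι) (A : ι → Set α) (hA : ∀ i ∈ s, #(A i) < κ) :
    #(⋃ i ∈ s, A i) < κ := by
  classical
  induction s using Finset.induction_on with
  | empty => simpa using aleph0_pos.trans_le hκ
  | insert a s _ ih =>
    rw [Finset.set_biUnion_insert]
    exact (mk_union_le _ _).trans_lt <| add_lt_of_lt hκ (hA a (s.mem_insert_self a))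
      (ih fun i hi => hA i (Finset.mem_insert_of_mem hi))

/-- Finitely many small up-sets cannot cover `κ` many elements with small up-sets, so a bad
sequence can be chosen greedily. -/
theorem exists_bad_seq_of_le_mk_small_upsets {Q : Type u} (r : Q → Q → Prop)
    {κ : Cardinal.{u}} (hκ : ℵ₀ ≤ κ) (hsmall : κ ≤ #{q : Q // #{q' : Q // r q q'} < κ}) :
    ∃ f : ℕ → Q, ∀ m n, m < n → ¬ r (f m) (f n) := by
  have hnot_covered : ∀ s : Finset Q, (∀ x ∈ s, #{q' : Q // r x q'} < κ) →
      ∃ y, #{q' : Q // r y q'} < κ ∧ ∀ x ∈ s, ¬ r x y := by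
    intro s hs
    by_contra! hcover
    have hsub : {q : Q | #{q' : Q // r q q'} < κ} ⊆ ⋃ x ∈ s, {q' : Q | r x q'} := by
      intro q hq
      obtain ⟨x, hx, hxq⟩ := hcover q hq
      exact Set.mem_biUnion hx hxq
    exact hsmall.not_gt <| (mk_le_mk_of_subset hsub).trans_lt (mk_biUnion_finset_lt hκ s _ hs)
  obtain ⟨f, -, hf⟩ := exists_seq_of_forall_finset_exists _ _ hnot_covered
  exact ⟨f, hf⟩

theorem card_not_kappa_embeddable_lt_general {Q : Type u} (le : Q → Q → Prop)
    (hwqo : ∀ f : ℕ → Q, ∃ n m : ℕ, n < m ∧ le (f n) (f m))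
    (κ : Cardinal.{u}) (hκ : Cardinal.aleph0 ≤ κ) :
    Cardinal.mk {q : Q // ¬ κ ≤ Cardinal.mk {q' : Q // le q q'}} < κ := by
  by_contra! hlarge
  obtain ⟨f, hbad⟩ := exists_bad_seq_of_le_mk_small_upsets le hκ hlarge
  obtain ⟨n, m, hnm, hle⟩ := hwqo f
  exact hbad n m hnm hle

/-- In a well-quasi-order `Q`, for any infinite cardinal `κ`, the set of elements which
are not `κ`-embeddable in `Q` (i.e. which lie below fewer than `κ` elements) has
cardinality strictly less than `κ`. -/
theorem card_not_kappa_embeddable_lt {Q : Type u} (le : Q → Q → Prop)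
    (hrefl : Reflexive le) (htrans : Transitive le)
    (hwqo : ∀ f : ℕ → Q, ∃ n m : ℕ, n < m ∧ le (f n) (f m))
    (κ : Cardinal.{u}) (hκ : Cardinal.aleph0 ≤ κ) :
    Cardinal.mk {q : Q // ¬ κ ≤ Cardinal.mk {q' : Q // le q q'}} < κ :=
  card_not_kappa_embeddable_lt_general le hwqo κ hκ
end

section
/- Let μ be an infinite cardinal and Q a quasi-order with |Q|_≡ = μ such that P_{≤κ}(Q) is well-quasi-ordered under the domination order, where κ is a cardinal with κ < ℵ_{μ⁺}. Then |P_κ(Q)|_≡ ≤ μ, i.e. the quotient of P_κ(Q) under the equivalence A ≡ B (meaning A ≤ B and B ≤ A in the domination order) has cardinality at most μ. -/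
/-!
For `A ⊆ Q` let `ν_A q = |A ∩ ↑q|` (`aboveCard`). Domination can only increase `ν`, and
conversely, `Q` being a wqo, `ν_A = ν_B` already forces `A ≡ B`, level by level of `ν`. The
points of finite level form finite sets, on which the numbers `ν` determine, by downward
induction, how many elements of `A` and of `B` lie in each `≡`-class; match inside the classes.
An infinite level `c` has at most `c` points, and each of them has `c` points of `B` at level `c`
above it, so it is matched greedily along a well-order of type `c`.

Hence the class of `A` is determined by `ν_A`, an antitone map with finitely many values `≤ κ`
whose strict sublevel sets are upper sets, i.e. by finitely many pairs (value, upper set).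
As `κ < ℵ_{μ⁺}` there are at most `μ` cardinals `≤ κ`, and every upper set of a wqo is
generated by finitely many `≡`-classes, so there are at most `μ` upper sets.
-/

universe u

def Dominates {Q : Type*} (le : Q → Q → Prop) (A B : Set Q) : Prop :=
  ∃ f : A → B, Function.Injective f ∧ ∀ a : A, le a.1 (f a).1

open Cardinal Set Function Order

section Dominates

variable {α ι : Type*} {r : α → α → Prop} {A B : Set α}

theorem dominates_of_mk_le (hAB : #A ≤ #B) (h : ∀ a ∈ A, ∀ b ∈ B, r a b) :
    Dominates r A B := by
  obtain ⟨f⟩ := (le_def _ _).1 hAB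
  exact ⟨f, f.injective, fun a => h a a.2 (f a) (f a).2⟩

theorem dominates_of_forall_fiber (g : α → ι)
    (h : ∀ i, Dominates r (A ∩ g ⁻¹' {i}) (B ∩ g ⁻¹' {i})) : Dominates r A B := by
  choose f hf_inj hf_rel using h
  have hf_fiber : ∀ i x, g (f i x) = i := fun i x => (f i x).2.2
  have transport : ∀ {i j} (hij : i = j) (x : ↥(A ∩ g ⁻¹' {i})),
      (f i x : α) = f j ⟨x, x.2.1, x.2.2.trans hij⟩ := by
    rintro i _ rfl x
    rfl
  refine ⟨fun a => ⟨f (g a) ⟨a, a.2, rfl⟩, (f _ _).2.1⟩, ?_,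
    fun a => hf_rel (g a) ⟨a, a.2, rfl⟩⟩
  rintro ⟨a, ha⟩ ⟨b, hb⟩ hab
  have hab' : (f (g a) ⟨a, ha, rfl⟩ : α) = f (g b) ⟨b, hb, rfl⟩ :=
    congrArg Subtype.val hab
  have hg : g a = g b := by rw [← hf_fiber _ ⟨a, ha, rfl⟩, hab', hf_fiber]
  rw [transport hg] at hab'
  have : a = b := congrArg Subtype.val (hf_inj (g b) (Subtype.ext hab'))
  exact Subtype.ext this

end Dominates

theorem exists_injective_forall_mem {ι β : Type u} {c : Cardinal.{u}} (hc : ℵ₀ ≤ c)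
    (hι : #ι ≤ c) (T : ι → Set β) (hT : ∀ i, c ≤ #(T i)) :
    ∃ f : ι → β, Injective f ∧ ∀ i, f i ∈ T i := by
  obtain ⟨e⟩ : Nonempty (ι ↪ c.ord.ToType) := by rwa [← le_def, mk_ord_toType]
  rcases isEmpty_or_nonempty ι with hι | ⟨⟨i₀⟩⟩
  · exact ⟨isEmptyElim, injective_of_subsingleton _, isEmptyElim⟩
  obtain ⟨b₀, -⟩ : (T i₀).Nonempty :=
    nonempty_coe_sort.1 (mk_ne_zero_iff.1 ((aleph0_pos.trans_le (hc.trans (hT i₀))).ne'))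
  have : Nonempty β := ⟨b₀⟩
  have hwf : WellFounded (InvImage (· < ·) e) := InvImage.wf e wellFounded_lt
  -- greedy choice along `e`: avoid the values taken at the fewer than `c` earlier indices
  let f : ι → β := hwf.fix fun i prev =>
    Classical.epsilon fun b => b ∈ T i ∧ ∀ j (hj : e j < e i), b ≠ prev j hj
  have hf : ∀ i, f i ∈ T i ∧ ∀ j, e j < e i → f i ≠ f j := by
    intro i
    rw [show f i = _ from hwf.fix_eq _ i]
    refine Classical.epsilon_spec (p := fun b => b ∈ T i ∧ ∀ j (hj : e j < e i), b ≠ f j) ?_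
    by_contra! hused
    have hcover : T i ⊆ range fun j : ↥(e ⁻¹' Iio (e i)) => f j := fun b hb => by
      obtain ⟨j, hj, rfl⟩ := hused b hb
      exact ⟨⟨j, hj⟩, rfl⟩
    have hearlier : #↥(e ⁻¹' Iio (e i)) < c :=
      (mk_preimage_of_injective _ _ e.injective).trans_lt (by simpa using mk_Iio_lt (e i))
    exact (hT i).not_gt ((mk_le_mk_of_subset hcover).trans_lt (mk_range_le.trans_lt hearlier))
  refine ⟨f, fun i j hij => ?_, fun i => (hf i).1⟩
  rcases lt_trichotomy (e i) (e j) with h | h | h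
  · exact absurd hij.symm ((hf j).2 i h)
  · exact e.injective h
  · exact absurd hij ((hf i).2 j h)

theorem toAntisymmetrization_eq_toAntisymmetrization_iff {α : Type*} [Preorder α] {a b : α} :
    toAntisymmetrization (· ≤ ·) a = toAntisymmetrization (· ≤ ·) b ↔ AntisymmRel (· ≤ ·) a b :=
  Quotient.eq

section ClassCount

variable {α : Type*} [Preorder α] [DecidableLE α] [DecidableLT α]

theorem card_filter_le_eq_card_filter_antisymmRel_add (u : Finset α) (q : α) :
    (u.filter (q ≤ ·)).card =
      (u.filter (AntisymmRel (· ≤ ·) q)).card + (u.filter (q < ·)).card := by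
  rw [← Finset.card_filter_add_card_filter_not (s := u.filter (q ≤ ·)) (· ≤ q),
    Finset.filter_filter, Finset.filter_filter]
  simp only [AntisymmRel, lt_iff_le_not_ge]
  rfl

theorem card_filter_antisymmRel_eq [DecidableEq α] {s t : Finset α}
    (h : ∀ q ∈ s ∪ t, (s.filter (q ≤ ·)).card = (t.filter (q ≤ ·)).card) {q : α}
    (hq : q ∈ s ∪ t) :
    (s.filter (AntisymmRel (· ≤ ·) q)).card = (t.filter (AntisymmRel (· ≤ ·) q)).card := by
  -- downward induction on the finite set `s ∪ t`: the count above `q` is the class of `q` plus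
  -- the classes strictly above it
  refine ((s ∪ t).finite_toSet.wellFoundedOn (r := (· > ·))).induction hq
    (P := fun q =>
      (s.filter (AntisymmRel (· ≤ ·) q)).card = (t.filter (AntisymmRel (· ≤ ·) q)).card)
    fun q hq ih => ?_
  classical
  let π := toAntisymmetrization (α := α) (· ≤ ·)
  have hfiber : ∀ (u : Finset α) x₀, q < x₀ →
      (u.filter (q < ·)).filter (π · = π x₀) = u.filter (AntisymmRel (· ≤ ·) x₀) := by
    intro u x₀ hx₀
    ext x
    simp only [Finset.mem_filter, π, toAntisymmetrization_eq_toAntisymmetrization_iff,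
      antisymmRel_comm (a := x)]
    exact ⟨fun ⟨⟨hxu, _⟩, hx⟩ => ⟨hxu, hx⟩,
      fun ⟨hxu, hx⟩ => ⟨⟨hxu, lt_of_lt_of_antisymmRel hx₀ hx⟩, hx⟩⟩
  have hmaps : ∀ u ⊆ s ∪ t,
      MapsTo π ↑(u.filter (q < ·)) ↑(((s ∪ t).filter (q < ·)).image π) :=
    fun u hu x hx => by
      rw [Finset.coe_filter] at hx
      exact Finset.mem_image_of_mem π (Finset.mem_filter.2 ⟨hu hx.1, hx.2⟩)
  have hstrict : (s.filter (q < ·)).card = (t.filter (q < ·)).card := by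
    rw [Finset.card_eq_sum_card_fiberwise (hmaps s Finset.subset_union_left),
      Finset.card_eq_sum_card_fiberwise (hmaps t Finset.subset_union_right)]
    refine Finset.sum_congr rfl fun b hb => ?_
    obtain ⟨x₀, hx₀, rfl⟩ := Finset.mem_image.1 hb
    rw [Finset.mem_filter] at hx₀
    rw [hfiber s x₀ hx₀.2, hfiber t x₀ hx₀.2]
    exact ih x₀ hx₀.1 hx₀.2
  have hall := h q hq
  rw [card_filter_le_eq_card_filter_antisymmRel_add s,
    card_filter_le_eq_card_filter_antisymmRel_add t] at hall
  omega

end ClassCount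

section Preorder

variable {α : Type*} [Preorder α]

noncomputable def aboveCard (A : Set α) (q : α) : Cardinal := #↥(A ∩ Ici q)

theorem aboveCard_anti (A : Set α) : Antitone (aboveCard A) := fun _ _ hpq =>
  mk_le_mk_of_subset (inter_subset_inter_right A (Ici_subset_Ici.2 hpq))

theorem Dominates.aboveCard_le {A B : Set α} (h : Dominates (· ≤ ·) A B) (q : α) :
    aboveCard A q ≤ aboveCard B q := by
  obtain ⟨f, hf, hle⟩ := h
  refine mk_le_of_injective (f := fun x : ↥(A ∩ Ici q) =>
    (⟨f ⟨x, x.2.1⟩, (f _).2, le_trans x.2.2 (hle ⟨x, x.2.1⟩)⟩ : ↥(B ∩ Ici q)))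
    fun x y hxy => ?_
  exact Subtype.ext (Subtype.mk_eq_mk.1 (hf (Subtype.ext (Subtype.mk_eq_mk.1 hxy))))

section WellQuasiOrdered

variable [WellQuasiOrderedLE α]

theorem exists_finset_subset_upperClosure (s : Set α) :
    ∃ t : Finset α, ↑t ⊆ s ∧ s ⊆ upperClosure (t : Set α) := by
  classical
  let π := toAntisymmetrization (α := α) (· ≤ ·)
  have hpwo : (π '' s).IsPWO :=
    (isPWO_of_wellQuasiOrderedLE s).image_of_monotone toAntisymmetrization_mono
  -- in the quotient partial order the minimal classes form an antichain, hence a finite set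
  have hmin : {p | Minimal (· ∈ π '' s) p}.Finite :=
    (setOfPred_minimal_antichain _).finite_of_partiallyWellOrderedOn
      (hpwo.mono fun _ hp => hp.1)
  have hrep : ∀ p ∈ {p | Minimal (· ∈ π '' s) p}, ∃ x ∈ s, π x = p := fun p hp => hp.1
  choose rep hrep_mem hrep using hrep
  have hreps := hmin.dependent_image rep
  refine ⟨hreps.toFinset, fun x hx => ?_, fun x hx => ?_⟩
  · obtain ⟨p, hp, rfl⟩ := hreps.mem_toFinset.1 hx
    exact hrep_mem p hp
  · obtain ⟨p, hpx, hp⟩ := hpwo.exists_le_minimal (mem_image_of_mem π hx)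
    refine mem_upperClosure.2 ⟨rep p hp, hreps.mem_toFinset.2 ⟨p, hp, rfl⟩, ?_⟩
    exact toAntisymmetrization_le_toAntisymmetrization_iff.1 ((hrep p hp).le.trans hpx)

theorem exists_finset_mk_le_card_mul_sup_aboveCard {S X : Set α} (hS : S ⊆ X) :
    ∃ t : Finset α, ↑t ⊆ S ∧ #S ≤ t.card * t.sup (aboveCard X) := by
  obtain ⟨t, htS, hSt⟩ := exists_finset_subset_upperClosure S
  refine ⟨t, htS, ?_⟩
  calc #S ≤ #↥(⋃ x : t, X ∩ Ici (x : α)) := mk_le_mk_of_subset fun y hy => by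
        obtain ⟨x, hxt, hxy⟩ := mem_upperClosure.1 (hSt hy)
        exact mem_iUnion.2 ⟨⟨x, hxt⟩, hS hy, hxy⟩
    _ ≤ #t * ⨆ x : t, aboveCard X x := mk_iUnion_le _
    _ ≤ t.card * t.sup (aboveCard X) := by
        rw [mk_coe_finset]
        gcongr
        exact ciSup_le' fun x => Finset.le_sup (f := aboveCard X) x.2

theorem mk_le_of_forall_aboveCard_le {S X : Set α} {c : Cardinal} (hS : S ⊆ X) (hc : ℵ₀ ≤ c)
    (h : ∀ x ∈ S, aboveCard X x ≤ c) : #S ≤ c := by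
  obtain ⟨t, htS, hSt⟩ := exists_finset_mk_le_card_mul_sup_aboveCard hS
  calc #S ≤ t.card * t.sup (aboveCard X) := hSt
    _ ≤ c * c := mul_le_mul' (natCast_lt_aleph0.le.trans hc)
        (Finset.sup_le fun x hx => h x (htS hx))
    _ = c := mul_eq_self hc

theorem mk_lt_of_forall_aboveCard_lt {S X : Set α} {c : Cardinal} (hS : S ⊆ X) (hc : ℵ₀ ≤ c)
    (h : ∀ x ∈ S, aboveCard X x < c) : #S < c := by
  obtain ⟨t, htS, hSt⟩ := exists_finset_mk_le_card_mul_sup_aboveCard hS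
  refine hSt.trans_lt (mul_lt_of_lt hc (natCast_lt_aleph0.trans_le hc) ?_)
  exact (Finset.sup_lt_iff (aleph0_pos.trans_le hc)).2 fun x hx => h x (htS hx)

theorem Antitone.finite_range {β : Type*} [LinearOrder β] [WellFoundedLT β] {f : α → β}
    (hf : Antitone f) : (range f).Finite := by
  have hpwo : (range f).IsPWO (α := βᵒᵈ) := by
    rw [← image_univ]
    exact (isPWO_of_wellQuasiOrderedLE univ).image_of_monotone hf.dual_right
  have : WellFoundedGT (range f) := ⟨hpwo.isWF⟩
  exact finite_coe_iff.1 (Finite.of_wellFoundedLT_wellFoundedGT _)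

end WellQuasiOrdered

end Preorder

section Matching

variable {α : Type*} [Preorder α] [WellQuasiOrderedLE α]

theorem finite_setOf_aboveCard_lt_aleph0 (X : Set α) :
    {x ∈ X | aboveCard X x < ℵ₀}.Finite :=
  lt_aleph0_iff_set_finite.1
    (mk_lt_of_forall_aboveCard_lt (sep_subset _ _) le_rfl fun _ hx => hx.2)

theorem natCast_card_filter_toFinset_eq_mk {X : Set α} {q : α} (hq : aboveCard X q < ℵ₀)
    {P : α → Prop} [DecidablePred P] (hP : ∀ x, P x → q ≤ x) :
    (((finite_setOf_aboveCard_lt_aleph0 X).toFinset.filter P).card : Cardinal) =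
      #↥(X ∩ {x | P x}) := by
  rw [← mk_coe_finset, ← Finset.coe_sort_coe, Finset.coe_filter]
  congr 2
  ext x
  simp only [Finite.mem_toFinset, mem_ofPred_eq, mem_inter_iff]
  exact ⟨fun ⟨⟨hx, _⟩, hPx⟩ => ⟨hx, hPx⟩,
    fun ⟨hx, hPx⟩ => ⟨⟨hx, (aboveCard_anti X (hP x hPx)).trans_lt hq⟩, hPx⟩⟩

theorem mk_inter_antisymmRel_eq {A B : Set α} (h : aboveCard A = aboveCard B) {q : α}
    (hq : q ∈ A) (hfin : aboveCard A q < ℵ₀) :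
    #↥(A ∩ {x | AntisymmRel (· ≤ ·) q x}) = #↥(B ∩ {x | AntisymmRel (· ≤ ·) q x}) := by
  classical
  have hA := finite_setOf_aboveCard_lt_aleph0 A
  have hB := finite_setOf_aboveCard_lt_aleph0 B
  have hlevel : ∀ x ∈ hA.toFinset ∪ hB.toFinset, aboveCard B x < ℵ₀ := by
    intro x hx
    rcases Finset.mem_union.1 hx with hx | hx
    · exact h ▸ (hA.mem_toFinset.1 hx).2
    · exact (hB.mem_toFinset.1 hx).2
  have hcount : ∀ x ∈ hA.toFinset ∪ hB.toFinset,
      (hA.toFinset.filter (x ≤ ·)).card = (hB.toFinset.filter (x ≤ ·)).card := by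
    intro x hx
    have hlevelA : aboveCard A x < ℵ₀ := h ▸ hlevel x hx
    exact_mod_cast ((natCast_card_filter_toFinset_eq_mk hlevelA fun _ => id).trans
      (congrFun h x)).trans (natCast_card_filter_toFinset_eq_mk (hlevel x hx) fun _ => id).symm
  have hqAB : q ∈ hA.toFinset ∪ hB.toFinset :=
    Finset.mem_union_left _ (hA.mem_toFinset.2 ⟨hq, hfin⟩)
  rw [← natCast_card_filter_toFinset_eq_mk (P := AntisymmRel (· ≤ ·) q) hfin fun _ hx => hx.1,
    ← natCast_card_filter_toFinset_eq_mk (P := AntisymmRel (· ≤ ·) q) (h ▸ hfin)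
      fun _ hx => hx.1,
    card_filter_antisymmRel_eq hcount hqAB]

theorem dominates_inter_preimage_of_lt_aleph0 {A B : Set α} (h : aboveCard A = aboveCard B)
    {c : Cardinal} (hc : c < ℵ₀) :
    Dominates (· ≤ ·) (A ∩ aboveCard A ⁻¹' {c}) (B ∩ aboveCard A ⁻¹' {c}) := by
  refine dominates_of_forall_fiber (toAntisymmetrization (· ≤ ·)) fun p => ?_
  rcases (A ∩ aboveCard A ⁻¹' {c} ∩ toAntisymmetrization (· ≤ ·) ⁻¹' {p}).eq_empty_or_nonempty
    with hempty | ⟨q, ⟨hqA, hqc⟩, hqp⟩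
  · rw [hempty]
    exact dominates_of_mk_le (by simp) (by simp)
  -- both fibers are the class of `q`, since `aboveCard A` is constant on classes
  have hclass : ∀ X : Set α,
      X ∩ aboveCard A ⁻¹' {c} ∩ toAntisymmetrization (· ≤ ·) ⁻¹' {p} =
        X ∩ {x | AntisymmRel (· ≤ ·) q x} := by
    intro X
    ext x
    simp only [mem_inter_iff, mem_preimage, mem_singleton_iff, mem_ofPred_eq] at hqc hqp ⊢
    rw [← hqc, ← hqp, toAntisymmetrization_eq_toAntisymmetrization_iff, antisymmRel_comm]
    refine ⟨fun ⟨⟨hx, _⟩, hqx⟩ => ⟨hx, hqx⟩, fun ⟨hx, hqx⟩ => ⟨⟨hx, ?_⟩, hqx⟩⟩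
    exact (aboveCard_anti A hqx.le).antisymm (aboveCard_anti A hqx.ge)
  rw [hclass, hclass]
  have hqc : aboveCard A q < ℵ₀ := (mem_singleton_iff.1 hqc).trans_lt hc
  exact dominates_of_mk_le (mk_inter_antisymmRel_eq h hqA hqc).le
    fun a ha b hb => ha.2.ge.trans hb.2.le

theorem dominates_inter_preimage_of_aleph0_le {A B : Set α} (h : aboveCard A = aboveCard B)
    {c : Cardinal} (hc : ℵ₀ ≤ c) :
    Dominates (· ≤ ·) (A ∩ aboveCard A ⁻¹' {c}) (B ∩ aboveCard A ⁻¹' {c}) := by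
  let T : ↥(A ∩ aboveCard A ⁻¹' {c}) → Set α := fun a =>
    B ∩ aboveCard A ⁻¹' {c} ∩ Ici (a : α)
  -- `B ∩ Ici a` has `c` elements, and fewer than `c` elements of `B` lie below level `c`
  have hT : ∀ a, c ≤ #(T a) := by
    rintro ⟨a, haA⟩
    have ha : aboveCard B a = c := h ▸ haA.2
    have hlower : #↥{y ∈ B | aboveCard B y < c} < c :=
      mk_lt_of_forall_aboveCard_lt (sep_subset _ _) hc fun _ hy => hy.2
    have hsplit : B ∩ Ici a ⊆ T ⟨a, haA⟩ ∪ {y ∈ B | aboveCard B y < c} := by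
      rintro y ⟨hyB, hay⟩
      rcases ((aboveCard_anti B hay).trans_eq ha).lt_or_eq with hlt | heq
      · exact Or.inr ⟨hyB, hlt⟩
      · exact Or.inl ⟨⟨hyB, show aboveCard A y = c from h ▸ heq⟩, hay⟩
    by_contra! hsmall
    have hle : c ≤ #↥(T ⟨a, haA⟩) + #↥{y ∈ B | aboveCard B y < c} :=
      ha.symm.le.trans ((mk_le_mk_of_subset hsplit).trans (mk_union_le _ _))
    exact hle.not_gt (add_lt_of_lt hc hsmall hlower)
  have hA : #↥(A ∩ aboveCard A ⁻¹' {c}) ≤ c :=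
    mk_le_of_forall_aboveCard_le inter_subset_left hc fun x hx => (mem_singleton_iff.1 hx.2).le
  obtain ⟨f, hf, hfT⟩ := exists_injective_forall_mem hc hA T hT
  exact ⟨fun a => ⟨f a, (hfT a).1⟩, fun a b hab => hf (congrArg Subtype.val hab),
    fun a => (hfT a).2⟩

theorem dominates_of_aboveCard_eq {A B : Set α} (h : aboveCard A = aboveCard B) :
    Dominates (· ≤ ·) A B :=
  dominates_of_forall_fiber (aboveCard A) fun c => (lt_or_ge c ℵ₀).elim
    (dominates_inter_preimage_of_lt_aleph0 h) (dominates_inter_preimage_of_aleph0_le h)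

theorem aboveCard_eq_iff_dominates {A B : Set α} :
    aboveCard A = aboveCard B ↔ Dominates (· ≤ ·) A B ∧ Dominates (· ≤ ·) B A :=
  ⟨fun h => ⟨dominates_of_aboveCard_eq h, dominates_of_aboveCard_eq h.symm⟩,
    fun h => funext fun q => (h.1.aboveCard_le q).antisymm (h.2.aboveCard_le q)⟩

end Matching

def sublevelCode {α β : Type*} [LT β] (f : α → β) : Set (β × Set α) :=
  range fun q => (f q, {x | f x < f q})

theorem sublevelCode_injective {α β : Type*} [LinearOrder β] :
    Injective (sublevelCode : (α → β) → Set (β × Set α)) := by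
  have key : ∀ f g : α → β, sublevelCode f = sublevelCode g → ∀ q, f q ≤ g q := by
    intro f g h q
    obtain ⟨p, hp⟩ : (f q, {x | f x < f q}) ∈ sublevelCode g := h ▸ mem_range_self q
    obtain ⟨hgp, hsub⟩ := Prod.mk.inj hp
    by_contra! hlt
    have hq : q ∈ {x | g x < g p} := by rw [mem_ofPred_eq, hgp]; exact hlt
    rw [hsub] at hq
    exact lt_irrefl _ hq
  exact fun f g h => funext fun q => (key f g h q).antisymm (key g f h.symm q)

theorem mk_setOf_finite_subset_le {γ : Type*} (s : Set γ) :
    #{t : Set γ | t.Finite ∧ t ⊆ s} ≤ max ℵ₀ #s := by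
  classical
  have hsurj : Surjective fun F : Finset s => (⟨(↑) '' (F : Set s), F.finite_toSet.image _,
      by rintro _ ⟨x, -, rfl⟩; exact x.2⟩ : {t : Set γ | t.Finite ∧ t ⊆ s}) := by
    rintro ⟨t, ht, hts⟩
    refine ⟨(ht.preimage Subtype.val_injective.injOn).toFinset, Subtype.ext ?_⟩
    simp [Subtype.image_preimage_coe, inter_eq_right.2 hts]
  calc _ ≤ #(Finset s) := mk_le_of_surjective hsurj
    _ ≤ #(List s) := mk_le_of_surjective List.toFinset_surjective
    _ ≤ max ℵ₀ #s := mk_list_le_max _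

theorem mk_upperSet_le {α : Type*} [Preorder α] [WellQuasiOrderedLE α]
    [Infinite (Antisymmetrization α (· ≤ ·))] :
    #(UpperSet α) ≤ #(Antisymmetrization α (· ≤ ·)) := by
  classical
  have hsurj : Surjective fun F : Finset (Antisymmetrization α (· ≤ ·)) =>
      (⟨toAntisymmetrization (· ≤ ·) ⁻¹' (upperClosure (F : Set (Antisymmetrization α (· ≤ ·))) :
          Set (Antisymmetrization α (· ≤ ·))),
        (upperClosure _).upper.preimage toAntisymmetrization_mono⟩ : UpperSet α) := by
    intro U
    obtain ⟨t, htU, hUt⟩ := exists_finset_subset_upperClosure (U : Set α)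
    refine ⟨t.image (toAntisymmetrization (· ≤ ·)),
      SetLike.coe_injective (Subset.antisymm ?_ ?_)⟩
    · rintro x ⟨_, hp, hpx⟩
      obtain ⟨y, hy, rfl⟩ := Finset.mem_image.1 hp
      exact U.upper (toAntisymmetrization_le_toAntisymmetrization_iff.1 hpx) (htU hy)
    · intro x hx
      obtain ⟨y, hy, hyx⟩ := mem_upperClosure.1 (hUt hx)
      exact ⟨_, Finset.mem_image_of_mem _ hy,
        toAntisymmetrization_le_toAntisymmetrization_iff.2 hyx⟩
  calc #(UpperSet α) ≤ #(Finset _) := mk_le_of_surjective hsurj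
    _ = _ := mk_finset_of_infinite _

theorem sublevelCode_aboveCard_finite_subset {α : Type*} [Preorder α] [WellQuasiOrderedLE α]
    {A : Set α} {κ : Cardinal} (hA : #A ≤ κ) :
    (sublevelCode (aboveCard A)).Finite ∧
      sublevelCode (aboveCard A) ⊆ Iic κ ×ˢ range ((↑) : UpperSet α → Set α) := by
  refine ⟨?_, ?_⟩
  · refine ((aboveCard_anti A).finite_range.image
      fun c => (c, {x | aboveCard A x < c})).subset ?_
    rintro _ ⟨q, rfl⟩
    exact mem_image_of_mem _ (mem_range_self q)
  · rintro _ ⟨q, rfl⟩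
    exact ⟨(mk_le_mk_of_subset inter_subset_left).trans hA,
      ⟨⟨_, fun x y hxy hx => (aboveCard_anti A hxy).trans_lt hx⟩, rfl⟩⟩

theorem mk_Iic_le_of_lt_aleph_succ {μ κ : Cardinal.{u}} (hμ : ℵ₀ ≤ μ)
    (hκ : κ < ℵ_ (succ μ).ord) : #(Iic κ) ≤ lift.{u + 1} μ := by
  rw [aleph_limit (isSuccLimit_ord (hμ.trans (le_succ μ)))] at hκ
  obtain ⟨⟨o, ho⟩, hκo⟩ := (lt_ciSup_iff' bddAbove_of_small).1 hκ
  calc #(Iic κ) ≤ #(Iio (ℵ_ o)) := mk_le_mk_of_subset (Iic_subset_Iio.2 hκo)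
    _ = #(Iio (Ordinal.omega0 + o)) := by
      rw [aleph_eq_preAleph, ← preAleph.image_Iio, mk_image_eq preAleph.injective]
    _ = lift (ℵ₀ + o.card) := by rw [mk_Iio_ordinal, Ordinal.card_add, Ordinal.card_omega0]
    _ ≤ lift μ := lift_le.2 (add_le_of_le hμ hμ (lt_succ_iff.1 (lt_ord.1 ho)))

theorem mk_setOf_finite_subset_Iic_prod_upperSet_le {α : Type u} [Preorder α]
    [WellQuasiOrderedLE α] {μ κ : Cardinal.{u}} (hμ : ℵ₀ ≤ μ)
    (hα : #(Antisymmetrization α (· ≤ ·)) = μ) (hκ : κ < ℵ_ (succ μ).ord) :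
    #{t : Set (Cardinal × Set α) | t.Finite ∧ t ⊆ Iic κ ×ˢ range ((↑) : UpperSet α → Set α)} ≤
      lift.{u + 1} μ := by
  have : Infinite (Antisymmetrization α (· ≤ ·)) := infinite_iff.2 (hα ▸ hμ)
  have hμ' : ℵ₀ ≤ lift.{u + 1} μ := aleph0_le_lift.2 hμ
  refine (mk_setOf_finite_subset_le _).trans (max_le hμ' ?_)
  rw [← (Equiv.Set.prod _ _).symm.cardinal_eq, mk_prod, lift_id'.{u, u + 1}]
  calc _ ≤ lift.{u + 1} μ * lift.{u + 1} μ := mul_le_mul' (mk_Iic_le_of_lt_aleph_succ hμ hκ)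
        (lift_le.2 (mk_range_le.trans (mk_upperSet_le.trans_eq hα)))
    _ = lift.{u + 1} μ := mul_eq_self hμ'

theorem wellQuasiOrderedLE_of_dominates {α : Type*} [Preorder α] {κ : Cardinal} (hκ : κ ≠ 0)
    (h : ∀ f : ℕ → {A : Set α // #A ≤ κ},
      ∃ n m : ℕ, n < m ∧ Dominates (· ≤ ·) (f n).1 (f m).1) :
    WellQuasiOrderedLE α := by
  refine ⟨fun f => ?_⟩
  obtain ⟨n, m, hnm, g, -, hg⟩ :=
    h fun n => ⟨{f n}, by rw [mk_singleton]; exact Cardinal.one_le_iff_ne_zero.2 hκ⟩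
  refine ⟨n, m, hnm, ?_⟩
  exact (mem_singleton_iff.1 (g ⟨f n, rfl⟩).2) ▸ hg ⟨f n, rfl⟩

/-- Let `μ` be an infinite cardinal and `Q` a quasi-order with `|Q|_≡ = μ` such that
`P_{≤κ}(Q)` is well-quasi-ordered under the domination order, where `κ < ℵ_{μ⁺}`.
Then `|P_κ(Q)|_≡ ≤ μ`. -/
theorem card_quot_powersetCard_le {Q : Type u} (le : Q → Q → Prop)
    (hrefl : Reflexive le) (htrans : Transitive le)
    (μ : Cardinal.{u}) (hμ : Cardinal.aleph0 ≤ μ)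
    (hQ : Cardinal.mk (Quot fun a b : Q => le a b ∧ le b a) = μ)
    (κ : Cardinal.{u}) (hκ : κ < Cardinal.aleph (Order.succ μ).ord)
    (hwqo : ∀ f : ℕ → {A : Set Q // Cardinal.mk A ≤ κ},
      ∃ n m : ℕ, n < m ∧ Dominates le (f n).1 (f m).1) :
    Cardinal.mk (Quot fun A B : {A : Set Q // Cardinal.mk A = κ} =>
      Dominates le A.1 B.1 ∧ Dominates le B.1 A.1) ≤ μ := by
  let _ : Preorder Q := { le := le, le_refl := hrefl, le_trans := fun _ _ _ => @htrans _ _ _ }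
  rcases eq_or_ne κ 0 with rfl | hκ0
  · refine mk_quot_le.trans ((le_one_iff_subsingleton.2 ⟨fun A B => Subtype.ext ?_⟩).trans
      (one_le_aleph0.trans hμ))
    rw [mk_set_eq_zero_iff.1 A.2, mk_set_eq_zero_iff.1 B.2]
  have := wellQuasiOrderedLE_of_dominates hκ0 hwqo
  let Φ : (Quot fun A B : {A : Set Q // #A = κ} => Dominates le A.1 B.1 ∧ Dominates le B.1 A.1) →
      {t : Set (Cardinal × Set Q) | t.Finite ∧ t ⊆ Iic κ ×ˢ range ((↑) : UpperSet Q → Set Q)} :=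
    Quot.lift (fun A => ⟨_, sublevelCode_aboveCard_finite_subset A.2.le⟩)
      fun A B hAB => Subtype.ext (congrArg sublevelCode (aboveCard_eq_iff_dominates.2 hAB))
  have hΦ : Injective Φ := by
    rintro ⟨A⟩ ⟨B⟩ hAB
    exact Quot.sound
      (aboveCard_eq_iff_dominates.1 (sublevelCode_injective (congrArg Subtype.val hAB)))
  rw [← lift_le.{u + 1}]
  calc lift.{u + 1} #(Quot _) ≤ lift.{u} #_ := lift_mk_le_lift_mk_of_injective hΦ
    _ = #_ := lift_id'.{u, u + 1} _
    _ ≤ lift.{u + 1} μ := mk_setOf_finite_subset_Iic_prod_upperSet_le hμ hQ hκ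
end
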